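/- (Lemma 1, gradient form.) Let X be a measurable space, β a probability measure on X (the data distribution p_data), d ∈ ℕ, θ₀ ∈ ℝ^d, and P : ℝ^d → Measure X a family of probability measures (the generator family p_{g_θ}). Let r : X → (0,1) be measurable (the reversed discriminator x ↦ q^r_{φ₀}(y=0|x)), set ρ := (1/2)•P θ₀ + (1/2)•β, Z₀ := ∫ r dρ, assume 0 < Z₀ < 1, and define π₀ := Z₀⁻¹ • (r·ρ) and π₁ := (1−Z₀)⁻¹ • ((1−r)·ρ). Assume: (i) log∘(1−r) is integrable with respect to β and klDiv(β‖π₁) < ⊤; (ii) there is a neighborhood U of θ₀ such that for all θ ∈ U, P θ ≪ ρ, klDiv(P θ‖ρ) < ⊤, and log∘r is integrable with respect to P θ; (iii) the function G(θ) := (1/2)·(klDiv(P θ‖π₀)).toReal + (1/2)·(klDiv(β‖π₁)).toReal − (JSD(P θ, β)).toReal is differentiable at θ₀; (iv) the function H(θ) := (klDiv((1/2)•P θ + (1/2)•β ‖ ρ)).toReal is differentiable at θ₀. Then the generator objective F(θ) := −(1/2)∫ log(r x) d(P θ) − (1/2)∫ log(1−r x) dβ is differentiable at θ₀ and ∇F(θ₀)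 = ∇G(θ₀); i.e., the gradient of the negative GAN generator objective at θ₀ equals the gradient of E_{p(y)}[KL(p_θ(x|y)‖q^r(x|y))] − JSD(p_{g_θ}, p_data) at θ₀. -/

import Mathlib

/-!
On a neighbourhood of `θ₀` we have `F = G - H - (log Z₀ + log (1 - Z₀)) / 2`. Indeed `π₀` and `π₁`
are the exponential tilts of `ρ` by `log r` and `log (1 - r)`, so `KL(μ ‖ π₀) = KL(μ ‖ ρ) - E_μ[log r]
+ log Z₀` and likewise for `π₁`; the remaining divergences cancel by the compensation identity
`½ KL(μ ‖ ρ) + ½ KL(ν ‖ ρ) = JSD(μ, ν) + KL(½ μ + ½ ν ‖ ρ)`, which is the chain rule for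
log-likelihood ratios through the mixture. Finally `H ≥ 0 = H θ₀`, so `H` has zero derivative
at `θ₀`.
-/

open MeasureTheory Real
open scoped ENNReal NNReal

open scoped Classical in
/-- Kullback-Leibler divergence of measures (Mathlib's definition). -/
noncomputable def klDiv {X : Type*} [MeasurableSpace X] (μ ν : Measure X) : ℝ≥0∞ :=
  if μ ≪ ν ∧ Integrable (llr μ ν) μ then ENNReal.ofReal (∫ x, llr μ ν x ∂μ) else ⊤

/-- Jensen-Shannon divergence of measures. -/
noncomputable def JSD {X : Type*} [MeasurableSpace X] (μ ν : Measure X) : ℝ≥0∞ :=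
  (1 / 2) * klDiv μ ((1 / 2 : ℝ≥0∞) • μ + (1 / 2 : ℝ≥0∞) • ν) +
    (1 / 2) * klDiv ν ((1 / 2 : ℝ≥0∞) • μ + (1 / 2 : ℝ≥0∞) • ν)

section Divergence

variable {X : Type*} [MeasurableSpace X] {μ ν ρ : Measure X}

lemma klDiv_lt_top_iff : klDiv μ ν < ⊤ ↔ μ ≪ ν ∧ Integrable (llr μ ν) μ := by
  unfold klDiv
  split_ifs with h <;> simp [h]

-- `InformationTheory.klDiv` also adds `ν univ - μ univ`, which vanishes for equal masses.
lemma klDiv_eq_informationTheory_klDiv (h : μ Set.univ = ν Set.univ) :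
    klDiv μ ν = InformationTheory.klDiv μ ν := by
  unfold klDiv
  split_ifs with hc
  · simp [InformationTheory.klDiv_of_ac_of_integrable hc.1 hc.2, measureReal_def, h]
  · exact (InformationTheory.klDiv_eq_top_iff.mpr fun hac hint => hc ⟨hac, hint⟩).symm

lemma toReal_klDiv_of_measure_eq [IsFiniteMeasure μ] [IsFiniteMeasure ν] (hμν : μ ≪ ν)
    (h : μ Set.univ = ν Set.univ) : (klDiv μ ν).toReal = ∫ x, llr μ ν x ∂μ := by
  rw [klDiv_eq_informationTheory_klDiv h, InformationTheory.toReal_klDiv_of_measure_eq hμν h]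

lemma klDiv_self (μ : Measure X) [SigmaFinite μ] : klDiv μ μ = 0 := by
  rw [klDiv_eq_informationTheory_klDiv rfl, InformationTheory.klDiv_self]

lemma rnDeriv_le_inv_of_smul_le [IsFiniteMeasure μ] [SigmaFinite ν] {c : ℝ≥0∞} (hc : c ≠ ⊤)
    (h : c • μ ≤ ν) : μ.rnDeriv ν ≤ᵐ[ν] fun _ => c⁻¹ := by
  filter_upwards [Measure.rnDeriv_le_one_of_le h, Measure.rnDeriv_smul_left_of_ne_top μ ν hc]
    with x hle heq
  rw [heq] at hle
  exact ENNReal.le_inv_iff_mul_le.mpr (by simpa [mul_comm] using hle)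

-- A bounded density has bounded `klFun`, which is integrable against the finite measure `ν`.
lemma integrable_llr_of_smul_le [IsFiniteMeasure μ] [IsFiniteMeasure ν] {c : ℝ≥0∞} (hc0 : c ≠ 0)
    (hc : c ≠ ⊤) (h : c • μ ≤ ν) : Integrable (llr μ ν) μ := by
  have hμν : μ ≪ ν :=
    (Measure.absolutelyContinuous_smul hc0).trans (Measure.absolutelyContinuous_of_le h)
  rw [← InformationTheory.integrable_klFun_rnDeriv_iff hμν]
  obtain ⟨C, hC⟩ := (isCompact_Icc (a := (0 : ℝ)) (b := c⁻¹.toReal)).exists_bound_of_continuousOn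
    InformationTheory.continuous_klFun.continuousOn
  refine .of_bound (InformationTheory.measurable_klFun.comp
    (Measure.measurable_rnDeriv μ ν).ennreal_toReal).aestronglyMeasurable C ?_
  filter_upwards [rnDeriv_le_inv_of_smul_le hc h] with x hle
  exact hC _ ⟨ENNReal.toReal_nonneg, ENNReal.toReal_mono (ENNReal.inv_ne_top.mpr hc0) hle⟩

lemma llr_ae_eq_llr_add_llr [SigmaFinite μ] [SigmaFinite ν] [SigmaFinite ρ]
    (hμν : μ ≪ ν) (hνρ : ν ≪ ρ) :
    llr μ ρ =ᵐ[μ] fun x => llr μ ν x + llr ν ρ x := by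
  filter_upwards [(hμν.trans hνρ).ae_eq (Measure.rnDeriv_mul_rnDeriv (κ := ρ) hμν),
    Measure.rnDeriv_pos hμν, hμν.ae_le (Measure.rnDeriv_lt_top μ ν),
    hμν.ae_le (Measure.rnDeriv_pos hνρ),
    (hμν.trans hνρ).ae_le (Measure.rnDeriv_lt_top ν ρ)] with x hmul hμν_pos hμν_lt hνρ_pos hνρ_lt
  simp only [llr_def]
  rw [← hmul, Pi.mul_apply, ENNReal.toReal_mul,
    Real.log_mul (ENNReal.toReal_pos hμν_pos.ne' hμν_lt.ne).ne'
      (ENNReal.toReal_pos hνρ_pos.ne' hνρ_lt.ne).ne']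

end Divergence

section Mixture

variable {X : Type*} [MeasurableSpace X] {μ ν ρ : Measure X}

lemma absolutelyContinuous_half_add_half_left (μ ν : Measure X) :
    μ ≪ (1 / 2 : ℝ≥0∞) • μ + (1 / 2 : ℝ≥0∞) • ν :=
  (Measure.absolutelyContinuous_smul (c := (1 / 2 : ℝ≥0∞)) (by simp)).add_right _

lemma absolutelyContinuous_half_add_half_right (μ ν : Measure X) :
    ν ≪ (1 / 2 : ℝ≥0∞) • μ + (1 / 2 : ℝ≥0∞) • ν :=
  (Measure.absolutelyContinuous_smul (c := (1 / 2 : ℝ≥0∞)) (by simp)).add_right' _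

variable [IsProbabilityMeasure μ] [IsProbabilityMeasure ν]

instance isProbabilityMeasure_half_add_half :
    IsProbabilityMeasure ((1 / 2 : ℝ≥0∞) • μ + (1 / 2 : ℝ≥0∞) • ν) :=
  ⟨by simp [ENNReal.inv_two_add_inv_two]⟩

lemma integrable_llr_half_add_half_left :
    Integrable (llr μ ((1 / 2 : ℝ≥0∞) • μ + (1 / 2 : ℝ≥0∞) • ν)) μ :=
  integrable_llr_of_smul_le (by simp) (by simp) (Measure.le_add_right le_rfl)

lemma integrable_llr_half_add_half_right :
    Integrable (llr ν ((1 / 2 : ℝ≥0∞) • μ + (1 / 2 : ℝ≥0∞) • ν)) ν :=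
  integrable_llr_of_smul_le (by simp) (by simp) (Measure.le_add_left le_rfl)

lemma toReal_JSD :
    (JSD μ ν).toReal =
      (∫ x, llr μ ((1 / 2 : ℝ≥0∞) • μ + (1 / 2 : ℝ≥0∞) • ν) x ∂μ) / 2 +
        (∫ x, llr ν ((1 / 2 : ℝ≥0∞) • μ + (1 / 2 : ℝ≥0∞) • ν) x ∂ν) / 2 := by
  have hμ := integrable_llr_half_add_half_left (μ := μ) (ν := ν)
  have hν := integrable_llr_half_add_half_right (μ := μ) (ν := ν)
  have hμm := absolutelyContinuous_half_add_half_left μ ν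
  have hνm := absolutelyContinuous_half_add_half_right μ ν
  rw [JSD, ENNReal.toReal_add, ENNReal.toReal_mul, ENNReal.toReal_mul,
    toReal_klDiv_of_measure_eq hμm (by simp only [measure_univ]),
    toReal_klDiv_of_measure_eq hνm (by simp only [measure_univ])]
  · simp [div_eq_inv_mul]
  all_goals exact ENNReal.mul_ne_top (by simp) (klDiv_lt_top_iff.mpr ⟨‹_›, ‹_›⟩).ne

theorem toReal_klDiv_add_toReal_klDiv_eq_JSD_add_klDiv_half_add_half [IsProbabilityMeasure ρ]
    (hμρ : μ ≪ ρ) (hνρ : ν ≪ ρ) (hμ : Integrable (llr μ ρ) μ) (hν : Integrable (llr ν ρ) ν) :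
    (klDiv μ ρ).toReal / 2 + (klDiv ν ρ).toReal / 2 =
      (JSD μ ν).toReal + (klDiv ((1 / 2 : ℝ≥0∞) • μ + (1 / 2 : ℝ≥0∞) • ν) ρ).toReal := by
  set m := (1 / 2 : ℝ≥0∞) • μ + (1 / 2 : ℝ≥0∞) • ν
  have hmρ : m ≪ ρ := (Measure.smul_absolutelyContinuous.trans hμρ).add_left
    (Measure.smul_absolutelyContinuous.trans hνρ)
  have chain_μ := llr_ae_eq_llr_add_llr (absolutelyContinuous_half_add_half_left μ ν) hmρ
  have chain_ν := llr_ae_eq_llr_add_llr (absolutelyContinuous_half_add_half_right μ ν) hmρ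
  have hμm_int : Integrable (llr μ m) μ := integrable_llr_half_add_half_left
  have hνm_int : Integrable (llr ν m) ν := integrable_llr_half_add_half_right
  have hmρ_μ : Integrable (llr m ρ) μ := (hμ.sub hμm_int).congr <| by
    filter_upwards [chain_μ] with x hx
    rw [Pi.sub_apply, hx, add_sub_cancel_left]
  have hmρ_ν : Integrable (llr m ρ) ν := (hν.sub hνm_int).congr <| by
    filter_upwards [chain_ν] with x hx
    rw [Pi.sub_apply, hx, add_sub_cancel_left]
  have hmρ_m : ∫ x, llr m ρ x ∂m = (∫ x, llr m ρ x ∂μ) / 2 + (∫ x, llr m ρ x ∂ν) / 2 := by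
    calc ∫ x, llr m ρ x ∂m
        = ∫ x, llr m ρ x ∂((1 / 2 : ℝ≥0∞) • μ) + ∫ x, llr m ρ x ∂((1 / 2 : ℝ≥0∞) • ν) :=
          integral_add_measure (hmρ_μ.smul_measure (by simp)) (hmρ_ν.smul_measure (by simp))
      _ = _ := by simp [integral_smul_measure, div_eq_inv_mul]
  rw [toReal_JSD, toReal_klDiv_of_measure_eq hμρ (by simp only [measure_univ]),
    toReal_klDiv_of_measure_eq hνρ (by simp only [measure_univ]),
    toReal_klDiv_of_measure_eq hmρ (by simp only [measure_univ]), hmρ_m,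
    integral_congr_ae chain_μ, integral_congr_ae chain_ν, integral_add hμm_int hmρ_μ,
    integral_add hνm_int hmρ_ν]
  ring

end Mixture

section Tilt

variable {X : Type*} [MeasurableSpace X] {μ ρ : Measure X} {g : X → ℝ}

lemma tilted_log_eq_smul_withDensity (hg : ∀ x, 0 < g x) (hρg : 0 < ∫ x, g x ∂ρ) :
    ρ.tilted (fun x => log (g x)) =
      (ENNReal.ofReal (∫ x, g x ∂ρ))⁻¹ • ρ.withDensity (fun x => ENNReal.ofReal (g x)) := by
  have hexp (x : X) : exp (log (g x)) = g x := exp_log (hg x)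
  rw [Measure.tilted, ← withDensity_smul' _ _ (by simp [hρg])]
  congr 1
  funext x
  rw [hexp, integral_congr_ae (.of_forall hexp), ENNReal.ofReal_div_of_pos hρg, Pi.smul_apply,
    smul_eq_mul, div_eq_mul_inv, mul_comm]

lemma integrable_llr_of_integrable_llr_tilted_log [IsFiniteMeasure μ] [SigmaFinite ρ]
    (hμρ : μ ≪ ρ) (hg : ∀ x, 0 < g x) (hgρ : Integrable g ρ)
    (hgμ : Integrable (fun x => log (g x)) μ)
    (h : Integrable (llr μ (ρ.tilted fun x => log (g x))) μ) : Integrable (llr μ ρ) μ := by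
  have hexp : (fun x => exp (log (g x))) = g := funext fun x => exp_log (hg x)
  refine ((h.add hgμ).sub (integrable_const (log (∫ x, g x ∂ρ)))).congr ?_
  filter_upwards [llr_tilted_right hμρ (by rwa [hexp])] with x hx
  rw [Pi.sub_apply, Pi.add_apply, hx, hexp]
  ring

lemma toReal_klDiv_tilted_log [IsProbabilityMeasure μ] [IsProbabilityMeasure ρ]
    (hμρ : μ ≪ ρ) (hg : ∀ x, 0 < g x) (hgρ : Integrable g ρ)
    (hgμ : Integrable (fun x => log (g x)) μ) (h_int : Integrable (llr μ ρ) μ) :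
    (klDiv μ (ρ.tilted fun x => log (g x))).toReal =
      (klDiv μ ρ).toReal - ∫ x, log (g x) ∂μ + log (∫ x, g x ∂ρ) := by
  have hexp : (fun x => exp (log (g x))) = g := funext fun x => exp_log (hg x)
  have hgρ' : Integrable (fun x => exp (log (g x))) ρ := by rwa [hexp]
  have := isProbabilityMeasure_tilted hgρ'
  rw [toReal_klDiv_of_measure_eq (hμρ.trans (absolutelyContinuous_tilted hgρ'))
      (by simp only [measure_univ]), toReal_klDiv_of_measure_eq hμρ (by simp only [measure_univ]),
    integral_llr_tilted_right hμρ hgμ hgρ' h_int, hexp]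

end Tilt

lemma differentiableAt_and_fderiv_eq_of_eventuallyEq_sub_of_isLocalMin {E : Type*}
    [NormedAddCommGroup E] [NormedSpace ℝ E] {F G H : E → ℝ} {x : E} {c : ℝ}
    (hG : DifferentiableAt ℝ G x) (hH : DifferentiableAt ℝ H x) (hH_min : IsLocalMin H x)
    (hF : F =ᶠ[nhds x] fun y => G y - H y - c) :
    DifferentiableAt ℝ F x ∧ fderiv ℝ F x = fderiv ℝ G x := by
  refine ⟨((hG.sub hH).sub_const c).congr_of_eventuallyEq hF, ?_⟩
  rw [hF.fderiv_eq, fderiv_sub_const, fderiv_fun_sub hG hH, hH_min.fderiv_eq_zero, sub_zero]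

theorem gan_generator_gradient_general
    {X : Type*} [MeasurableSpace X] (β : Measure X) [IsProbabilityMeasure β]
    {d : ℕ} (θ₀ : EuclideanSpace ℝ (Fin d))
    (P : EuclideanSpace ℝ (Fin d) → Measure X) [∀ θ, IsProbabilityMeasure (P θ)]
    (r : X → ℝ) (hr01 : ∀ x, r x ∈ Set.Ioo (0 : ℝ) 1)
    (ρ : Measure X) (hρ : ρ = (1 / 2 : ℝ≥0∞) • P θ₀ + (1 / 2 : ℝ≥0∞) • β)
    (Z₀ : ℝ) (hZ₀_def : Z₀ = ∫ x, r x ∂ρ) (hZ₀ : 0 < Z₀ ∧ Z₀ < 1)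
    (π₀ π₁ : Measure X)
    (hπ₀ : π₀ = (ENNReal.ofReal Z₀)⁻¹ • ρ.withDensity (fun x => ENNReal.ofReal (r x)))
    (hπ₁ : π₁ = (ENNReal.ofReal (1 - Z₀))⁻¹ •
      ρ.withDensity (fun x => ENNReal.ofReal (1 - r x)))
    (hβint : Integrable (fun x => Real.log (1 - r x)) β)
    (hβkl : klDiv β π₁ < ⊤)
    (hU : ∃ U ∈ nhds θ₀, ∀ θ ∈ U, P θ ≪ ρ ∧ klDiv (P θ) ρ < ⊤ ∧
      Integrable (fun x => Real.log (r x)) (P θ))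
    (G : EuclideanSpace ℝ (Fin d) → ℝ)
    (hG_def : G = fun θ => (1 / 2) * (klDiv (P θ) π₀).toReal
      + (1 / 2) * (klDiv β π₁).toReal - (JSD (P θ) β).toReal)
    (hG : DifferentiableAt ℝ G θ₀)
    (H : EuclideanSpace ℝ (Fin d) → ℝ)
    (hH_def : H = fun θ =>
      (klDiv ((1 / 2 : ℝ≥0∞) • P θ + (1 / 2 : ℝ≥0∞) • β) ρ).toReal)
    (hH : DifferentiableAt ℝ H θ₀)
    (F : EuclideanSpace ℝ (Fin d) → ℝ)
    (hF_def : F = fun θ => -((1 / 2) * ∫ x, Real.log (r x) ∂(P θ))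
      - (1 / 2) * ∫ x, Real.log (1 - r x) ∂β) :
    DifferentiableAt ℝ F θ₀ ∧ fderiv ℝ F θ₀ = fderiv ℝ G θ₀ := by
  obtain ⟨hZ₀_pos, hZ₀_lt⟩ := hZ₀
  obtain ⟨U, hU_nhds, hU⟩ := hU
  have : IsProbabilityMeasure ρ := hρ ▸ inferInstance
  have hβρ : β ≪ ρ := hρ ▸ absolutelyContinuous_half_add_half_right _ _
  have hr_pos (x : X) : 0 < r x := (hr01 x).1
  have hr_compl_pos (x : X) : 0 < 1 - r x := sub_pos.2 (hr01 x).2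
  have hr_int : Integrable r ρ := .of_integral_ne_zero (hZ₀_def ▸ hZ₀_pos.ne')
  have hr_compl_int : Integrable (fun x => 1 - r x) ρ := (integrable_const 1).sub hr_int
  have hr_compl_mass : ∫ x, 1 - r x ∂ρ = 1 - Z₀ := by
    rw [integral_sub (integrable_const 1) hr_int, ← hZ₀_def]
    simp
  have hπ₀_tilted : π₀ = ρ.tilted fun x => log (r x) := by
    rw [hπ₀, hZ₀_def, tilted_log_eq_smul_withDensity hr_pos (hZ₀_def ▸ hZ₀_pos)]
  have hπ₁_tilted : π₁ = ρ.tilted fun x => log (1 - r x) := by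
    rw [hπ₁, ← hr_compl_mass,
      tilted_log_eq_smul_withDensity hr_compl_pos (hr_compl_mass ▸ sub_pos.2 hZ₀_lt)]
  have hβρ_int : Integrable (llr β ρ) β :=
    integrable_llr_of_integrable_llr_tilted_log hβρ hr_compl_pos hr_compl_int hβint
      (hπ₁_tilted ▸ (klDiv_lt_top_iff.mp hβkl).2)
  have hFGH : ∀ θ ∈ U, F θ = G θ - H θ - (log Z₀ + log (1 - Z₀)) / 2 := by
    intro θ hθ
    obtain ⟨hPρ, hPρ_kl, hP_log⟩ := hU θ hθ
    have hPρ_int := (klDiv_lt_top_iff.mp hPρ_kl).2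
    have hP_π₀ := toReal_klDiv_tilted_log hPρ hr_pos hr_int hP_log hPρ_int
    have hβ_π₁ := toReal_klDiv_tilted_log hβρ hr_compl_pos hr_compl_int hβint hβρ_int
    have h_mix :=
      toReal_klDiv_add_toReal_klDiv_eq_JSD_add_klDiv_half_add_half hPρ hβρ hPρ_int hβρ_int
    rw [← hZ₀_def, ← hπ₀_tilted] at hP_π₀
    rw [hr_compl_mass, ← hπ₁_tilted] at hβ_π₁
    simp only [hF_def, hG_def, hH_def]
    linarith
  have hH_min : IsLocalMin H θ₀ := .of_forall fun θ => by
    simp only [hH_def, ← hρ, klDiv_self, ENNReal.toReal_zero, ENNReal.toReal_nonneg]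
  exact differentiableAt_and_fderiv_eq_of_eventuallyEq_sub_of_isLocalMin hG hH hH_min
    (Filter.eventually_of_mem hU_nhds hFGH)

/-- Lemma 1, gradient form: the gradient of the negative GAN generator objective at `θ₀`
equals the gradient of `E_{p(y)}[KL(p_θ(x|y)‖q^r(x|y))] − JSD(p_{g_θ}, p_data)` at `θ₀`. -/
theorem gan_generator_gradient
    {X : Type*} [MeasurableSpace X] (β : Measure X) [IsProbabilityMeasure β]
    {d : ℕ} (θ₀ : EuclideanSpace ℝ (Fin d))
    (P : EuclideanSpace ℝ (Fin d) → Measure X) [∀ θ, IsProbabilityMeasure (P θ)]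
    (r : X → ℝ) (hr_meas : Measurable r) (hr01 : ∀ x, r x ∈ Set.Ioo (0 : ℝ) 1)
    (ρ : Measure X) (hρ : ρ = (1 / 2 : ℝ≥0∞) • P θ₀ + (1 / 2 : ℝ≥0∞) • β)
    (Z₀ : ℝ) (hZ₀_def : Z₀ = ∫ x, r x ∂ρ) (hZ₀ : 0 < Z₀ ∧ Z₀ < 1)
    (π₀ π₁ : Measure X)
    (hπ₀ : π₀ = (ENNReal.ofReal Z₀)⁻¹ • ρ.withDensity (fun x => ENNReal.ofReal (r x)))
    (hπ₁ : π₁ = (ENNReal.ofReal (1 - Z₀))⁻¹ •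
      ρ.withDensity (fun x => ENNReal.ofReal (1 - r x)))
    (hβint : Integrable (fun x => Real.log (1 - r x)) β)
    (hβkl : klDiv β π₁ < ⊤)
    (hU : ∃ U ∈ nhds θ₀, ∀ θ ∈ U, P θ ≪ ρ ∧ klDiv (P θ) ρ < ⊤ ∧
      Integrable (fun x => Real.log (r x)) (P θ))
    (G : EuclideanSpace ℝ (Fin d) → ℝ)
    (hG_def : G = fun θ => (1 / 2) * (klDiv (P θ) π₀).toReal
      + (1 / 2) * (klDiv β π₁).toReal - (JSD (P θ) β).toReal)
    (hG : DifferentiableAt ℝ G θ₀)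
    (H : EuclideanSpace ℝ (Fin d) → ℝ)
    (hH_def : H = fun θ =>
      (klDiv ((1 / 2 : ℝ≥0∞) • P θ + (1 / 2 : ℝ≥0∞) • β) ρ).toReal)
    (hH : DifferentiableAt ℝ H θ₀)
    (F : EuclideanSpace ℝ (Fin d) → ℝ)
    (hF_def : F = fun θ => -((1 / 2) * ∫ x, Real.log (r x) ∂(P θ))
      - (1 / 2) * ∫ x, Real.log (1 - r x) ∂β) :
    DifferentiableAt ℝ F θ₀ ∧ fderiv ℝ F θ₀ = fderiv ℝ G θ₀ :=
  gan_generator_gradient_general β θ₀ P r hr01 ρ hρ Z₀ hZ₀_def hZ₀ π₀ π₁ hπ₀ hπ₁ hβint hβkl hU G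
    hG_def hG H hH_def hH F hF_def
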